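/- For all natural numbers m, n ≥ 1, the function C_{m,n}(θ) = Σ_k binom(m, n+k) binom(m, n−k) cos(kθ) satisfies the second-order differential identity C''_{m,n}(θ) = m² C_{m−1,n−1}(θ) − n² C_{m,n}(θ) for all real θ. -/

import Mathlib

/-!
Differentiating `cos (k θ)` twice multiplies the `k`-th coefficient of `C_{m,n}` by `-k²`.
Writing `n² - k² = (n + k)(n - k)` and applying the absorption identity
`j · C(m, j) = m · C(m - 1, j - 1)` to both binomial factors turns
`(n² - k²) · C(m, n + k) C(m, n - k)` into `m² · C(m - 1, n - 1 + k) C(m - 1, n - 1 - k)`,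
the `k`-th coefficient of `m² C_{m-1,n-1}`.
-/

/-- Binomial coefficient `choose m j` extended to integer lower index, with the
convention that it vanishes for `j < 0` (and automatically for `j > m`). -/
def ch (m : ℕ) (j : ℤ) : ℕ := if 0 ≤ j then m.choose j.toNat else 0

/-- The function `C_{m,n}(θ) = Σ_k binom(m,n+k) binom(m,n−k) cos(kθ)`,
the sum taken over all integers `k` (only `|k| ≤ m` contributes). -/
noncomputable def Cfun (m n : ℕ) : ℝ → ℝ := fun θ =>
  ∑ k ∈ Finset.Icc (-(m : ℤ)) (m : ℤ),
    ((ch m ((n : ℤ) + k) * ch m ((n : ℤ) - k) : ℕ) : ℝ) * Real.cos (k * θ)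

open Finset Real

lemma ch_eq_zero_of_neg {m : ℕ} {j : ℤ} (h : j < 0) : ch m j = 0 := by
  simp [ch, not_le.mpr h]

lemma ch_eq_zero_of_lt {m : ℕ} {j : ℤ} (h : (m : ℤ) < j) : ch m j = 0 := by
  rw [ch, if_pos (by omega), Nat.choose_eq_zero_of_lt (by omega)]

lemma ch_natCast (m j : ℕ) : ch m j = m.choose j := by
  simp [ch]

lemma intCast_mul_ch_succ (m : ℕ) (j : ℤ) :
    (j : ℝ) * ch (m + 1) j = (m + 1) * ch m (j - 1) := by
  rcases lt_or_ge j 1 with hj | hj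
  · rw [ch_eq_zero_of_neg (by omega : j - 1 < 0)]
    rcases (by omega : j < 0 ∨ j = 0) with hj | rfl
    · simp [ch_eq_zero_of_neg hj]
    · simp
  · obtain ⟨i, rfl⟩ : ∃ i : ℕ, j = i + 1 := ⟨(j - 1).toNat, by omega⟩
    rw [add_sub_cancel_right, ← Nat.cast_succ, ch_natCast, ch_natCast]
    exact_mod_cast (mul_comm _ _).trans (Nat.add_one_mul_choose_eq m i).symm

def Ccoeff (m n : ℕ) (k : ℤ) : ℝ := ((ch m ((n : ℤ) + k) * ch m ((n : ℤ) - k) : ℕ) : ℝ)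

lemma Ccoeff_eq_zero {m n : ℕ} {k : ℤ} (hk : k ∉ Icc (-(m : ℤ)) m) : Ccoeff m n k = 0 := by
  rw [mem_Icc, not_and_or, not_le, not_le] at hk
  rcases hk with hk | hk
  · simp [Ccoeff, ch_eq_zero_of_lt (by omega : (m : ℤ) < n - k)]
  · simp [Ccoeff, ch_eq_zero_of_lt (by omega : (m : ℤ) < n + k)]

lemma Cfun_eq_sum_Ccoeff (m n : ℕ) :
    Cfun m n = fun θ => ∑ k ∈ Icc (-(m : ℤ)) m, Ccoeff m n k * cos (k * θ) :=
  rfl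

lemma Cfun_eq_sum_of_subset {m n : ℕ} {s : Finset ℤ} (hs : Icc (-(m : ℤ)) m ⊆ s) (θ : ℝ) :
    Cfun m n θ = ∑ k ∈ s, Ccoeff m n k * cos (k * θ) := by
  rw [Cfun_eq_sum_Ccoeff]
  exact sum_subset hs fun _ _ hk => by rw [Ccoeff_eq_zero hk, zero_mul]

/-- `(n+1)² - k² = (n+1+k)(n+1-k)`, and absorption applies to each factor. -/
lemma Ccoeff_succ_succ (m n : ℕ) (k : ℤ) :
    -(k : ℝ) ^ 2 * Ccoeff (m + 1) (n + 1) k =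
      (m + 1 : ℝ) ^ 2 * Ccoeff m n k - (n + 1 : ℝ) ^ 2 * Ccoeff (m + 1) (n + 1) k := by
  have hplus := intCast_mul_ch_succ m (n + k + 1)
  have hminus := intCast_mul_ch_succ m (n - k + 1)
  rw [add_sub_cancel_right] at hplus hminus
  simp only [Ccoeff]
  rw [show ((n + 1 : ℕ) : ℤ) + k = n + k + 1 by push_cast; ring,
    show ((n + 1 : ℕ) : ℤ) - k = n - k + 1 by push_cast; ring]
  push_cast at hplus hminus ⊢
  linear_combination ((n - k + 1) * (ch (m + 1) (n - k + 1) : ℝ)) * hplus +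
    ((m + 1) * (ch m (n + k) : ℝ)) * hminus

section CosineSums

variable {ι : Type*} (s : Finset ι) (c ω : ι → ℝ)

lemma hasDerivAt_sum_mul_cos (θ : ℝ) :
    HasDerivAt (fun θ => ∑ i ∈ s, c i * cos (ω i * θ))
      (∑ i ∈ s, -(ω i * c i) * sin (ω i * θ)) θ := by
  refine HasDerivAt.fun_sum fun i _ => ?_
  exact (((hasDerivAt_id θ).const_mul (ω i)).cos).const_mul (c i)
    |>.congr_deriv (by simp only [id]; ring)

lemma hasDerivAt_sum_mul_sin (θ : ℝ) :
    HasDerivAt (fun θ => ∑ i ∈ s, c i * sin (ω i * θ))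
      (∑ i ∈ s, ω i * c i * cos (ω i * θ)) θ := by
  refine HasDerivAt.fun_sum fun i _ => ?_
  exact (((hasDerivAt_id θ).const_mul (ω i)).sin).const_mul (c i)
    |>.congr_deriv (by simp only [id]; ring)

lemma deriv_deriv_sum_mul_cos (θ : ℝ) :
    deriv (deriv fun θ => ∑ i ∈ s, c i * cos (ω i * θ)) θ =
      ∑ i ∈ s, -ω i ^ 2 * c i * cos (ω i * θ) := by
  rw [funext fun θ => (hasDerivAt_sum_mul_cos s c ω θ).deriv,
    (hasDerivAt_sum_mul_sin s (fun i => -(ω i * c i)) ω θ).deriv]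
  exact sum_congr rfl fun i _ => by ring

end CosineSums

/-- For `m, n ≥ 1`, `C''_{m,n}(θ) = m² C_{m−1,n−1}(θ) − n² C_{m,n}(θ)`. -/
theorem stmt4 (m n : ℕ) (hm : 1 ≤ m) (hn : 1 ≤ n) (θ : ℝ) :
    deriv (deriv (Cfun m n)) θ =
      (m : ℝ) ^ 2 * Cfun (m - 1) (n - 1) θ - (n : ℝ) ^ 2 * Cfun m n θ := by
  obtain ⟨m, rfl⟩ := Nat.exists_eq_add_of_le' hm
  obtain ⟨n, rfl⟩ := Nat.exists_eq_add_of_le' hn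
  have hsub : Icc (-(m : ℤ)) m ⊆ Icc (-((m + 1 : ℕ) : ℤ)) ((m + 1 : ℕ) : ℤ) :=
    Icc_subset_Icc (by omega) (by omega)
  rw [Nat.add_sub_cancel, Nat.add_sub_cancel, Cfun_eq_sum_of_subset hsub,
    Cfun_eq_sum_Ccoeff (m + 1), deriv_deriv_sum_mul_cos, mul_sum, mul_sum, ← sum_sub_distrib]
  refine sum_congr rfl fun k _ => ?_
  push_cast
  rw [Ccoeff_succ_succ]
  ring
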